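/- arXiv:1604.06560 — 3 statements merged into one kernel-verified Lean document; each statement's English description precedes it below -/
import Mathlib

section
/- Let U, V be nonempty finite sets and let R = U₁×V₁ ∪ ... ∪ U_d×V_d be a union of at most d combinatorial rectangles with R having measure less than δ in U×V (i.e., |R| < δ|U||V|). Then there exist subsets U' ⊆ U and V' ⊆ V with (U'×V') ∩ R = ∅, |U'| ≥ (1 − d·δ^{1/2})|U|, and |V'| ≥ (1 − d·δ^{1/2})|V|. -/
/-- If `R = ⋃ i, Uᵢ ×ˢ Vᵢ` is a union of `d` combinatorial rectangles in `U × V`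
of total measure `< δ`, then one can delete a small part of `U` and of `V` to get
`U' × V'` disjoint from `R`, with `|U'| ≥ (1 - d√δ)|U|` and `|V'| ≥ (1 - d√δ)|V|`. -/
theorem rectangle_cleanup
    {U V : Type*} [DecidableEq U] [DecidableEq V]
    (Uf : Finset U) (Vf : Finset V) (hU : Uf.Nonempty) (hV : Vf.Nonempty)
    (d : ℕ) (Ui : Fin d → Finset U) (Vi : Fin d → Finset V)
    (hUi : ∀ i, Ui i ⊆ Uf) (hVi : ∀ i, Vi i ⊆ Vf)
    (δ : ℝ)
    (hR : (((Finset.univ : Finset (Fin d)).biUnion fun i => Ui i ×ˢ Vi i).card : ℝ)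
            < δ * (Uf.card : ℝ) * (Vf.card : ℝ)) :
    ∃ U' ⊆ Uf, ∃ V' ⊆ Vf,
      (∀ i, Disjoint (U' ×ˢ V') (Ui i ×ˢ Vi i)) ∧
      (1 - d * Real.sqrt δ) * (Uf.card : ℝ) ≤ (U'.card : ℝ) ∧
      (1 - d * Real.sqrt δ) * (Vf.card : ℝ) ≤ (V'.card : ℝ) := by
  classical
  have hUpos : (0:ℝ) < Uf.card := by exact_mod_cast Finset.card_pos.2 hU
  have hVpos : (0:ℝ) < Vf.card := by exact_mod_cast Finset.card_pos.2 hV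
  have hδpos : 0 < δ := by
    rcases le_or_gt δ 0 with h | h
    · exfalso
      have hc : (0:ℝ) ≤ (((Finset.univ : Finset (Fin d)).biUnion
          fun i => Ui i ×ˢ Vi i).card : ℝ) := Nat.cast_nonneg _
      nlinarith [mul_pos hUpos hVpos]
    · exact h
  set s := Real.sqrt δ with hsdef
  have hs : 0 < s := Real.sqrt_pos.2 hδpos
  have hss : s * s = δ := Real.mul_self_sqrt hδpos.le
  have hrect : ∀ i, ((Ui i).card : ℝ) * ((Vi i).card : ℝ)
      < δ * Uf.card * Vf.card := by
    intro i
    have hsub : Ui i ×ˢ Vi i ⊆ (Finset.univ : Finset (Fin d)).biUnion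
        fun i => Ui i ×ˢ Vi i :=
      Finset.subset_biUnion_of_mem (fun i => Ui i ×ˢ Vi i) (Finset.mem_univ i)
    have hle := Finset.card_le_card hsub
    have : ((Ui i ×ˢ Vi i).card : ℝ) ≤ (((Finset.univ : Finset (Fin d)).biUnion
        fun i => Ui i ×ˢ Vi i).card : ℝ) := by exact_mod_cast hle
    calc ((Ui i).card : ℝ) * ((Vi i).card : ℝ)
        = ((Ui i ×ˢ Vi i).card : ℝ) := by rw [Finset.card_product]; push_cast; ring
      _ ≤ _ := this
      _ < _ := hR
  set S := Finset.univ.filter (fun i => ((Ui i).card : ℝ) ≤ s * Uf.card) with hS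
  have hVsmall : ∀ i ∈ Finset.univ \ S, ((Vi i).card : ℝ) ≤ s * Vf.card := by
    intro i hi
    rw [Finset.mem_sdiff, hS, Finset.mem_filter] at hi
    push_neg at hi
    have h1 : s * Uf.card < ((Ui i).card : ℝ) := hi.2 (Finset.mem_univ i)
    have h2 := hrect i
    by_contra hcon
    push_neg at hcon
    have h3 : s * Uf.card * (s * Vf.card) < ((Ui i).card:ℝ) * ((Vi i).card:ℝ) :=
      mul_lt_mul'' h1 hcon (by positivity) (by positivity)
    have heq : s * Uf.card * (s * Vf.card) = δ * Uf.card * Vf.card := by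
      rw [← hss]; ring
    linarith
  refine ⟨Uf \ S.biUnion Ui, Finset.sdiff_subset,
    Vf \ (Finset.univ \ S).biUnion Vi, Finset.sdiff_subset, ?_, ?_, ?_⟩
  · intro i
    rw [Finset.disjoint_left]
    rintro ⟨u, v⟩ hp hq
    rw [Finset.mem_product] at hp hq
    by_cases hiS : i ∈ S
    · have := (Finset.mem_sdiff.1 hp.1).2
      exact this (Finset.mem_biUnion.2 ⟨i, hiS, hq.1⟩)
    · have := (Finset.mem_sdiff.1 hp.2).2
      exact this (Finset.mem_biUnion.2 ⟨i, Finset.mem_sdiff.2 ⟨Finset.mem_univ i, hiS⟩, hq.2⟩)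
  · have hsub : S.biUnion Ui ⊆ Uf := by
      intro x hx
      rcases Finset.mem_biUnion.1 hx with ⟨i, _, hxi⟩
      exact hUi i hxi
    have hcard : ((Uf \ S.biUnion Ui).card : ℝ)
        = (Uf.card : ℝ) - ((S.biUnion Ui).card : ℝ) := by
      rw [Finset.card_sdiff_of_subset hsub]
      have := Finset.card_le_card hsub
      push_cast [Nat.cast_sub this]
      ring
    have hb1 : ((S.biUnion Ui).card : ℝ) ≤ ∑ i ∈ S, ((Ui i).card : ℝ) := by
      exact_mod_cast Finset.card_biUnion_le
    have hb2 : ∑ i ∈ S, ((Ui i).card : ℝ) ≤ S.card * (s * Uf.card) := by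
      rw [← nsmul_eq_mul]
      refine Finset.sum_le_card_nsmul _ _ _ ?_
      intro i hi
      rw [hS, Finset.mem_filter] at hi
      exact hi.2
    have hb3 : (S.card : ℝ) ≤ d := by
      have := Finset.card_le_card (Finset.subset_univ S)
      simpa using (Nat.cast_le.2 this : (S.card : ℝ) ≤ (Finset.univ : Finset (Fin d)).card)
    rw [hcard]
    nlinarith [mul_pos hs hUpos]
  · have hsub : (Finset.univ \ S).biUnion Vi ⊆ Vf := by
      intro x hx
      rcases Finset.mem_biUnion.1 hx with ⟨i, _, hxi⟩
      exact hVi i hxi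
    have hcard : ((Vf \ (Finset.univ \ S).biUnion Vi).card : ℝ)
        = (Vf.card : ℝ) - (((Finset.univ \ S).biUnion Vi).card : ℝ) := by
      rw [Finset.card_sdiff_of_subset hsub]
      have := Finset.card_le_card hsub
      push_cast [Nat.cast_sub this]
      ring
    have hb1 : (((Finset.univ \ S).biUnion Vi).card : ℝ)
        ≤ ∑ i ∈ Finset.univ \ S, ((Vi i).card : ℝ) := by
      exact_mod_cast Finset.card_biUnion_le
    have hb2 : ∑ i ∈ Finset.univ \ S, ((Vi i).card : ℝ)
        ≤ (Finset.univ \ S).card * (s * Vf.card) := by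
      rw [← nsmul_eq_mul]
      exact Finset.sum_le_card_nsmul _ _ _ hVsmall
    have hb3 : ((Finset.univ \ S).card : ℝ) ≤ d := by
      have := Finset.card_le_card (Finset.subset_univ (Finset.univ \ S))
      simpa using (Nat.cast_le.2 this :
        ((Finset.univ \ S).card : ℝ) ≤ (Finset.univ : Finset (Fin d)).card)
    rw [hcard]
    nlinarith [mul_pos hs hVpos]
end

section
/- Conversely, given a graph u on [n] with a clique of size ω, there exists a satisfying q-assignment making (u, q) satisfy all clauses of Clique_{n,ω}; and given a ξ-colorable graph v, there exists an r-assignment making (v, r) satisfy all clauses of Color_{n,ξ}. -/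
/-- Conversely: if the graph `p` (a symmetric Boolean adjacency function on `[n]`)
contains a clique of size `ω`, then there is a `q`-assignment satisfying all clauses
of `Clique_{n,ω}`; and if `p` is properly `ξ`-colorable, then there is an
`r`-assignment satisfying all clauses of `Color_{n,ξ}`. -/
theorem satisfying_assignments_exist (n ω ξ : ℕ) (hn : ω ≤ n) (hξ : 1 ≤ ξ)
    (p : Fin n → Fin n → Bool) :
    ((∃ f : Fin ω → Fin n, Function.Injective f ∧
        ∀ u v, u ≠ v → p (f u) (f v) = true) →
      ∃ q : Fin ω → Fin n → Bool,
        (∀ u, ∃ i, q u i = true) ∧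
        (∀ u v i, u ≠ v → ¬(q u i = true ∧ q v i = true)) ∧
        (∀ u v i j, u ≠ v → i ≠ j → q u i = true → q v j = true → p i j = true)) ∧
    ((∃ c : Fin n → Fin ξ, ∀ i j, i ≠ j → p i j = true → c i ≠ c j) →
      ∃ r : Fin n → Fin ξ → Bool,
        (∀ i, ∃ v, r i v = true) ∧
        (∀ i u v, u ≠ v → ¬(r i u = true ∧ r i v = true)) ∧
        (∀ i j v, i ≠ j → r i v = true → r j v = true → p i j = false)) := by
  constructor
  · rintro ⟨f, hf, hclq⟩
    refine ⟨fun u i => decide (f u = i), fun u => ⟨f u, by simp⟩, ?_, ?_⟩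
    · rintro u v i huv ⟨h1, h2⟩
      simp only [decide_eq_true_eq] at h1 h2
      exact huv (hf (h1.trans h2.symm))
    · intro u v i j huv hij h1 h2
      simp only [decide_eq_true_eq] at h1 h2
      subst h1; subst h2
      exact hclq u v huv
  · rintro ⟨c, hc⟩
    refine ⟨fun i v => decide (c i = v), fun i => ⟨c i, by simp⟩, ?_, ?_⟩
    · rintro i u v huv ⟨h1, h2⟩
      simp only [decide_eq_true_eq] at h1 h2
      exact huv (h1.symm.trans h2)
    · intro i j v hij h1 h2
      simp only [decide_eq_true_eq] at h1 h2
      by_contra hp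
      exact hc i j hij (by simpa using hp) (h1.trans h2.symm)
end

section
/- If Bad ⊆ U × V is a union of d rectangles each of relative measure less than δ, with d·δ^{1/2} < 1, then there exists a pair (u,v) ∈ U × V outside Bad; in fact at least (1 − dδ^{1/2})²·|U||V| pairs lie outside Bad. -/
private lemma genbound_aux {W : Type*} [DecidableEq W] {d : ℕ} {s : ℝ} (hs0 : 0 ≤ s)
  (Wf : Finset W) (Wi : Fin d → Finset W) (B : Finset (Fin d))
  (hWc : (0:ℝ) < Wf.card)
  (hsmall : ∀ i ∈ B, ((Wi i).card:ℝ) ≤ s * Wf.card) :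
  (1 - (d:ℝ) * s) * Wf.card ≤ ((Wf \ B.biUnion Wi).card : ℝ) := by
  have h1 : Wf.card ≤ (Wf \ B.biUnion Wi).card + (B.biUnion Wi).card := by
    calc Wf.card ≤ ((Wf \ B.biUnion Wi) ∪ B.biUnion Wi).card :=
          Finset.card_le_card (by
            intro x hx
            by_cases hxB : x ∈ B.biUnion Wi
            · exact Finset.mem_union_right _ hxB
            · exact Finset.mem_union_left _ (Finset.mem_sdiff.2 ⟨hx, hxB⟩))
      _ ≤ _ := Finset.card_union_le _ _
  have h2 : ((B.biUnion Wi).card : ℝ) ≤ (d:ℝ) * s * Wf.card := by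
    have hBd : (B.card : ℝ) ≤ d := by
      exact_mod_cast (Finset.card_le_univ B).trans_eq (by simp)
    calc ((B.biUnion Wi).card : ℝ) ≤ ∑ i ∈ B, ((Wi i).card : ℝ) := by
          exact_mod_cast Finset.card_biUnion_le
      _ ≤ ∑ _i ∈ B, s * Wf.card := Finset.sum_le_sum hsmall
      _ = B.card * (s * Wf.card) := by rw [Finset.sum_const, nsmul_eq_mul]
      _ ≤ d * (s * Wf.card) :=
          mul_le_mul_of_nonneg_right hBd (mul_nonneg hs0 hWc.le)
      _ = (d:ℝ) * s * Wf.card := by ring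
  have h1' : (Wf.card:ℝ) ≤ ((Wf \ B.biUnion Wi).card : ℝ) + (B.biUnion Wi).card := by
    exact_mod_cast h1
  nlinarith

/-- If `Bad ⊆ U × V` is a union of `d` rectangles each of relative measure `< δ`,
with `d·√δ < 1`, then at least `(1 − d√δ)²·|U||V|` pairs lie outside `Bad`; in
particular some pair lies outside `Bad`. -/
theorem many_pairs_outside_bad
    {U V : Type*} [DecidableEq U] [DecidableEq V]
    (Uf : Finset U) (Vf : Finset V) (hU : Uf.Nonempty) (hV : Vf.Nonempty)
    (d : ℕ) (Ui : Fin d → Finset U) (Vi : Fin d → Finset V)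
    (hUi : ∀ i, Ui i ⊆ Uf) (hVi : ∀ i, Vi i ⊆ Vf)
    (δ : ℝ)
    (hrect : ∀ i, ((Ui i).card : ℝ) * ((Vi i).card : ℝ)
        < δ * ((Uf.card : ℝ) * (Vf.card : ℝ)))
    (hdδ : (d : ℝ) * Real.sqrt δ < 1) :
    (1 - (d : ℝ) * Real.sqrt δ) ^ 2 * ((Uf.card : ℝ) * (Vf.card : ℝ))
        ≤ (((Uf ×ˢ Vf) \ (Finset.univ : Finset (Fin d)).biUnion
              fun i => Ui i ×ˢ Vi i).card : ℝ) ∧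
    ∃ p ∈ Uf ×ˢ Vf, p ∉ (Finset.univ : Finset (Fin d)).biUnion
        fun i => Ui i ×ˢ Vi i := by
  classical
  set s := Real.sqrt δ with hs
  have hs0 : 0 ≤ s := Real.sqrt_nonneg δ
  have hUc : (0:ℝ) < Uf.card := by exact_mod_cast hU.card_pos
  have hVc : (0:ℝ) < Vf.card := by exact_mod_cast hV.card_pos
  have dich : ∀ i, ((Ui i).card:ℝ) ≤ s * Uf.card ∨ ((Vi i).card:ℝ) ≤ s * Vf.card := by
    intro i
    by_contra h
    push_neg at h
    obtain ⟨h1, h2⟩ := h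
    have hδpos : 0 < δ := by
      have h3 := hrect i
      have h4 : (0:ℝ) ≤ ((Ui i).card : ℝ) * ((Vi i).card : ℝ) :=
        mul_nonneg (Nat.cast_nonneg _) (Nat.cast_nonneg _)
      nlinarith [mul_pos hUc hVc]
    have hss : s * s = δ := Real.mul_self_sqrt hδpos.le
    have key := mul_lt_mul'' h1 h2 (mul_nonneg hs0 hUc.le) (mul_nonneg hs0 hVc.le)
    have heq : s * ↑Uf.card * (s * ↑Vf.card) = δ * (↑Uf.card * ↑Vf.card) := by
      rw [← hss]; ring
    linarith [hrect i]
  set A : Finset (Fin d) := Finset.univ.filter (fun i => ((Ui i).card:ℝ) ≤ s * Uf.card) with hA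
  set U' := Uf \ A.biUnion Ui with hU'
  set V' := Vf \ (Finset.univ \ A).biUnion Vi with hV'
  have hsub : U' ×ˢ V' ⊆ (Uf ×ˢ Vf) \ (Finset.univ : Finset (Fin d)).biUnion
      (fun i => Ui i ×ˢ Vi i) := by
    intro p hp
    rw [Finset.mem_product] at hp
    obtain ⟨hp1, hp2⟩ := hp
    rw [hU', Finset.mem_sdiff] at hp1
    rw [hV', Finset.mem_sdiff] at hp2
    rw [Finset.mem_sdiff, Finset.mem_product]
    refine ⟨⟨hp1.1, hp2.1⟩, ?_⟩
    intro hmem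
    rw [Finset.mem_biUnion] at hmem
    obtain ⟨i, -, hi⟩ := hmem
    rw [Finset.mem_product] at hi
    by_cases hiA : i ∈ A
    · exact hp1.2 (Finset.mem_biUnion.2 ⟨i, hiA, hi.1⟩)
    · exact hp2.2 (Finset.mem_biUnion.2 ⟨i, by simp [hiA], hi.2⟩)
  have hcU : (1 - (d:ℝ) * s) * Uf.card ≤ (U'.card : ℝ) :=
    genbound_aux hs0 Uf Ui A hUc (fun i hi => (Finset.mem_filter.1 hi).2)
  have hcV : (1 - (d:ℝ) * s) * Vf.card ≤ (V'.card : ℝ) := by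
    apply genbound_aux hs0 Vf Vi (Finset.univ \ A) hVc
    intro i hi
    rw [Finset.mem_sdiff] at hi
    have : i ∉ A := hi.2
    rw [hA, Finset.mem_filter] at this
    push_neg at this
    exact (dich i).resolve_left (fun hle => absurd hle (not_le.2 (this (Finset.mem_univ i))))
  have hpos : 0 < 1 - (d:ℝ) * s := by linarith
  have hprod : (1 - (d:ℝ) * s) ^ 2 * ((Uf.card:ℝ) * Vf.card)
      ≤ ((U' ×ˢ V').card : ℝ) := by
    have hc : ((U' ×ˢ V').card : ℝ) = (U'.card : ℝ) * V'.card := by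
      rw [Finset.card_product]; push_cast; ring
    rw [hc]
    calc (1 - (d:ℝ) * s) ^ 2 * ((Uf.card:ℝ) * Vf.card)
        = ((1 - (d:ℝ) * s) * Uf.card) * ((1 - (d:ℝ) * s) * Vf.card) := by ring
      _ ≤ (U'.card : ℝ) * V'.card :=
          mul_le_mul hcU hcV (mul_nonneg hpos.le hVc.le)
            (Nat.cast_nonneg _)
  have hmain : (1 - (d : ℝ) * s) ^ 2 * ((Uf.card : ℝ) * (Vf.card : ℝ))
      ≤ (((Uf ×ˢ Vf) \ (Finset.univ : Finset (Fin d)).biUnion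
            fun i => Ui i ×ˢ Vi i).card : ℝ) := by
    refine hprod.trans ?_
    exact_mod_cast Finset.card_le_card hsub
  refine ⟨hmain, ?_⟩
  have hposcard : (0:ℝ) < (((Uf ×ˢ Vf) \ (Finset.univ : Finset (Fin d)).biUnion
      fun i => Ui i ×ˢ Vi i).card : ℝ) := by
    have : (0:ℝ) < (1 - (d : ℝ) * s) ^ 2 * ((Uf.card : ℝ) * (Vf.card : ℝ)) := by
      positivity
    linarith
  have : ((Uf ×ˢ Vf) \ (Finset.univ : Finset (Fin d)).biUnion
      fun i => Ui i ×ˢ Vi i).Nonempty := by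
    rw [← Finset.card_pos]
    exact_mod_cast hposcard
  obtain ⟨p, hp⟩ := this
  rw [Finset.mem_sdiff] at hp
  exact ⟨p, hp.1, hp.2⟩
end
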